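/- arXiv:1112.4901 — 6 statements merged into one kernel-verified Lean document; each statement's English description precedes it below -/
import Mathlib

section
/- Let ν ⊆ λ be set partitions of {1,...,n} (as arc sets) with ν ≠ λ. Then Σ_{μ : ν ⊆ μ ⊆ λ} (−1)^{|λ−μ|} q^{−nst(μ−ν, ν) − nst(λ−μ, λ)} = 0, where q is a positive rational (or an indeterminate), nst(A,B) = #{i<j<k<l : (i,l)∈B, (j,k)∈A}. -/
open scoped Classical
open Finset

noncomputable section

/-- A set partition of `{1,…,n}` encoded as a set of arcs `(i,j)` with `1 ≤ i < j ≤ n`,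
no two distinct arcs sharing a left endpoint or a right endpoint. -/
def IsSP (n : ℕ) (lam : Finset (ℕ × ℕ)) : Prop :=
  (∀ a ∈ lam, 1 ≤ a.1 ∧ a.1 < a.2 ∧ a.2 ≤ n) ∧
  (∀ a ∈ lam, ∀ b ∈ lam, a ≠ b → a.1 ≠ b.1 ∧ a.2 ≠ b.2)

/-- `nstF A B = #{(i,j,k,l) : i<j<k<l, (i,l) ∈ B, (j,k) ∈ A}`. -/
def nstF (A B : Finset (ℕ × ℕ)) : ℕ :=
  ((B ×ˢ A).filter fun p => p.1.1 < p.2.1 ∧ p.2.1 < p.2.2 ∧ p.2.2 < p.1.2).card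

/-- `dimF λ = Σ_{(i,l)∈λ} (l-i)`. -/
def dimF (lam : Finset (ℕ × ℕ)) : ℕ := ∑ a ∈ lam, (a.2 - a.1)

/-- Supercharacter value `χ^λ_μ`. -/
def chiF {K : Type*} [Field K] (q : K) (lam mu : Finset (ℕ × ℕ)) : K :=
  if ∀ i j k : ℕ, i < j → j < k → (i, k) ∈ lam → (i, j) ∉ mu ∧ (j, k) ∉ mu then
    (q - 1) ^ (lam.card - (lam ∩ mu).card) * q ^ (dimF lam - lam.card) *
      (-1 : K) ^ ((lam ∩ mu).card) * (q ^ nstF mu lam)⁻¹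
  else 0

/-- `(j,k)` conflicts with `λ`: some arc of `λ` shares an endpoint with it and strictly contains it. -/
def cfltP (lam : Finset (ℕ × ℕ)) (a : ℕ × ℕ) : Prop :=
  ∃ b ∈ lam, (b.1 = a.1 ∧ a.1 < a.2 ∧ a.2 < b.2) ∨ (b.1 < a.1 ∧ a.1 < a.2 ∧ a.2 = b.2)

/-- Strictly nested pairs: inner arc of `ν` not conflicting with `λ`, nested in an arc of `λ`. -/
def snstF (nu lam : Finset (ℕ × ℕ)) : ℕ :=
  ((lam ×ˢ nu).filter fun p =>
    p.1.1 < p.2.1 ∧ p.2.1 < p.2.2 ∧ p.2.2 < p.1.2 ∧ ¬ cfltP lam p.2).card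

/-- Multiset of arc lengths, sorted decreasingly. -/
def dimv (lam : Finset (ℕ × ℕ)) : List ℕ :=
  ((lam.val.map fun a => a.2 - a.1).sort (· ≤ ·)).reverse

/-- All set partitions of `{1,…,n}` as arc sets. -/
def allSP (n : ℕ) : Finset (Finset (ℕ × ℕ)) :=
  ((Finset.Icc 1 n ×ˢ Finset.Icc 1 n).powerset).filter (IsSP n)

/-!
Toggle a longest arc `a` of `λ \ ν`. Every arc of `λ` strictly containing `a` is longer than `a`,
hence lies in `ν`; so `a` is nested in the same arcs of `ν` as of `λ`. Moving `a` from `λ \ μ`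
to `μ \ ν` therefore shifts the exponent of `q` from one `nst` term to the other without
changing it, while the sign flips: the terms cancel in pairs.
-/

lemma sum_filter_superset_powerset {α M : Type*} [DecidableEq α] [AddCommMonoid M]
    {s t : Finset α} (h : s ⊆ t) (f : Finset α → M) :
    ∑ u ∈ t.powerset.filter (fun u => s ⊆ u), f u = ∑ v ∈ (t \ s).powerset, f (s ∪ v) := by
  have hdisj : ∀ v ∈ (t \ s).powerset, (s ∪ v) \ s = v := fun v hv =>
    union_sdiff_cancel_left (disjoint_of_subset_right (mem_powerset.1 hv) disjoint_sdiff)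
  rw [← Icc_eq_filter_powerset, Icc_eq_image_powerset h, sum_image fun v hv w hw hvw => by
    rw [← hdisj v hv, ← hdisj w hw]; exact congrArg (· \ s) hvw]

def nestCount (B : Finset (ℕ × ℕ)) (x : ℕ × ℕ) : ℕ :=
  #{b ∈ B | b.1 < x.1 ∧ x.1 < x.2 ∧ x.2 < b.2}

lemma nstF_eq_sum_nestCount (A B : Finset (ℕ × ℕ)) : nstF A B = ∑ x ∈ A, nestCount B x := by
  rw [nstF, card_filter, sum_product, sum_comm]
  exact sum_congr rfl fun x _ => (card_filter _ _).symm

lemma nstF_insert {a : ℕ × ℕ} {A : Finset (ℕ × ℕ)} (B : Finset (ℕ × ℕ)) (h : a ∉ A) :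
    nstF (insert a A) B = nstF A B + nestCount B a := by
  rw [nstF_eq_sum_nestCount, nstF_eq_sum_nestCount, sum_insert h, add_comm]

lemma nestCount_eq_of_forall_sdiff_length_le {nu lam : Finset (ℕ × ℕ)} (hsub : nu ⊆ lam)
    {a : ℕ × ℕ} (hmax : ∀ b ∈ lam \ nu, b.2 - b.1 ≤ a.2 - a.1) :
    nestCount lam a = nestCount nu a := by
  refine congrArg card (Subset.antisymm (fun b hb => ?_) (filter_subset_filter _ hsub))
  rw [mem_filter] at hb ⊢
  refine ⟨by_contra fun hbnu => ?_, hb.2⟩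
  have := hmax b (mem_sdiff.2 ⟨hb.1, hbnu⟩)
  omega

lemma sum_powerset_alternating_nstF_eq_zero {K : Type*} [Field K] (q : K)
    {N L D : Finset (ℕ × ℕ)} {a : ℕ × ℕ} (ha : a ∈ D) (hcount : nestCount L a = nestCount N a) :
    ∑ s ∈ D.powerset, (-1 : K) ^ #(D \ s) * (q ^ (nstF s N + nstF (D \ s) L))⁻¹ = 0 := by
  have haE : a ∉ D.erase a := notMem_erase a D
  rw [← insert_erase ha, sum_powerset_insert haE, ← sum_add_distrib]
  refine sum_eq_zero fun s hs => ?_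
  have has : a ∉ s := fun h => haE (mem_powerset.1 hs h)
  rw [insert_sdiff_of_notMem _ has, insert_sdiff_insert, sdiff_insert_of_notMem haE,
    card_insert_of_notMem (fun h => haE (mem_sdiff.1 h).1), nstF_insert _ has,
    nstF_insert _ (fun h => haE (mem_sdiff.1 h).1), hcount, pow_succ]
  ring_nf

theorem stmt_2_general (q : ℚ) (nu lam : Finset (ℕ × ℕ))
    (hsub : nu ⊆ lam) (hne : nu ≠ lam) :
    ∑ mu ∈ lam.powerset.filter (fun m => nu ⊆ m),
      (-1 : ℚ) ^ ((lam \ mu).card) *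
        (q ^ (nstF (mu \ nu) nu + nstF (lam \ mu) lam))⁻¹ = 0 := by
  have hD : (lam \ nu).Nonempty := sdiff_nonempty.2 fun h => hne (hsub.antisymm h)
  obtain ⟨a, ha, hmax⟩ := exists_max_image (lam \ nu) (fun b => b.2 - b.1) hD
  rw [sum_filter_superset_powerset hsub, ← sum_powerset_alternating_nstF_eq_zero q ha
    (nestCount_eq_of_forall_sdiff_length_le hsub hmax)]
  refine sum_congr rfl fun s hs => ?_
  rw [union_sdiff_cancel_left (disjoint_of_subset_right (mem_powerset.1 hs) disjoint_sdiff),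
    sdiff_union_distrib, ← Finset.sdiff_sdiff_left']

/-- The alternating sum over `ν ⊆ μ ⊆ λ` vanishes when `ν ≠ λ`. -/
theorem stmt_2 (n : ℕ) (q : ℚ) (hq : 0 < q) (nu lam : Finset (ℕ × ℕ))
    (hlam : IsSP n lam) (hnu : IsSP n nu) (hsub : nu ⊆ lam) (hne : nu ≠ lam) :
    ∑ mu ∈ lam.powerset.filter (fun m => nu ⊆ m),
      (-1 : ℚ) ^ ((lam \ mu).card) *
        (q ^ (nstF (mu \ nu) nu + nstF (lam \ mu) lam))⁻¹ = 0 :=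
  stmt_2_general q nu lam hsub hne
end
end

section
/- The Möbius-type inversion holds: for set partitions μ, ν of {1,...,n} with arc sets, defining ρ_ν = Σ_{μ ⊇ ν} q^{−nst(μ−ν, ν)} κ_μ in the free module with basis {κ_μ}, one has κ_μ = Σ_{ν ⊇ μ} (−1)^{|ν−μ|} q^{−nst(ν−μ, ν)} ρ_ν. -/
open scoped Classical
open Finset

noncomputable section

/-!
Writing `ν = μ ∪ S` with `S ⊆ T := m \ μ`, additivity of `nst` in both arguments turns the
exponent `nst(ν \ μ, ν) + nst(m \ ν, ν)` into `nst(T, μ) + nst(T, S)`, and `nst(T, S)` is a sum over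
the arcs of `S`. The coefficient of `κ_m` in the right-hand side is therefore
`q^{-nst(T, μ)} ∏_{a ∈ T} (1 - q^{-nst(T, {a})})`, which vanishes unless `T = ∅`:
a shortest arc of `T` has no arc of `T` nested inside it.
-/

lemma nstF_union_left {A₁ A₂ : Finset (ℕ × ℕ)} (B : Finset (ℕ × ℕ)) (h : Disjoint A₁ A₂) :
    nstF (A₁ ∪ A₂) B = nstF A₁ B + nstF A₂ B := by
  rw [nstF, product_union, filter_union, card_union_of_disjoint]
  · rfl
  · exact disjoint_filter_filter (disjoint_product.mpr (Or.inr h))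

lemma nstF_union_right (A : Finset (ℕ × ℕ)) {B₁ B₂ : Finset (ℕ × ℕ)} (h : Disjoint B₁ B₂) :
    nstF A (B₁ ∪ B₂) = nstF A B₁ + nstF A B₂ := by
  rw [nstF, union_product, filter_union, card_union_of_disjoint]
  · rfl
  · exact disjoint_filter_filter (disjoint_product.mpr (Or.inl h))

lemma nstF_eq_sum_singleton_right (A B : Finset (ℕ × ℕ)) :
    nstF A B = ∑ b ∈ B, nstF A {b} := by
  induction B using Finset.induction_on with
  | empty => simp [nstF]
  | insert b B hb ih =>
    rw [insert_eq, nstF_union_right A (disjoint_singleton_left.mpr hb), sum_union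
      (disjoint_singleton_left.mpr hb), sum_singleton, ih]

lemma exists_nstF_singleton_eq_zero {T : Finset (ℕ × ℕ)} (hT : T.Nonempty) :
    ∃ a ∈ T, nstF T {a} = 0 := by
  obtain ⟨a, haT, hmin⟩ := exists_min_image T (fun a => a.2 - a.1) hT
  refine ⟨a, haT, card_eq_zero.mpr (filter_eq_empty_iff.mpr ?_)⟩
  intro p hp
  obtain ⟨hpa, hpT⟩ := mem_product.mp hp
  rw [mem_singleton.mp hpa]
  have := hmin p.2 hpT
  omega

lemma sum_powerset_neg_one_pow_mul_inv_pow_nstF {K : Type*} [Field K] (q : K)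
    (T : Finset (ℕ × ℕ)) :
    ∑ S ∈ T.powerset, (-1 : K) ^ S.card * (q ^ nstF T S)⁻¹ = if T = ∅ then 1 else 0 := by
  have hprod : ∑ S ∈ T.powerset, (-1 : K) ^ S.card * (q ^ nstF T S)⁻¹ =
      ∏ a ∈ T, (1 - (q ^ nstF T {a})⁻¹) := by
    rw [prod_sub]
    refine sum_congr rfl fun S _ => ?_
    rw [prod_const_one, mul_one, nstF_eq_sum_singleton_right T S, ← prod_pow_eq_pow_sum,
      prod_inv_distrib]
  rw [hprod]
  split_ifs with hT
  · simp [hT]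
  · obtain ⟨a, haT, ha⟩ := exists_nstF_singleton_eq_zero (nonempty_iff_ne_empty.mpr hT)
    exact prod_eq_zero haT (by simp [ha])

theorem sum_Icc_neg_one_pow_mul_inv_pow_nstF {K : Type*} [Field K] (q : K)
    (mu m : Finset (ℕ × ℕ)) :
    ∑ nu ∈ Icc mu m, (-1 : K) ^ (nu \ mu).card * (q ^ nstF (nu \ mu) nu)⁻¹ *
      (q ^ nstF (m \ nu) nu)⁻¹ = if mu = m then 1 else 0 := by
  by_cases hmu : mu ⊆ m
  swap
  · rw [Icc_eq_empty (fun h => hmu h), sum_empty, if_neg (by rintro rfl; exact hmu subset_rfl)]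
  have hterm : ∀ S ∈ (m \ mu).powerset,
      (-1 : K) ^ ((mu ∪ S) \ mu).card * (q ^ nstF ((mu ∪ S) \ mu) (mu ∪ S))⁻¹ *
        (q ^ nstF (m \ (mu ∪ S)) (mu ∪ S))⁻¹ =
      (q ^ nstF (m \ mu) mu)⁻¹ * ((-1 : K) ^ S.card * (q ^ nstF (m \ mu) S)⁻¹) := by
    intro S hS
    have hSm : S ⊆ m \ mu := mem_powerset.mp hS
    have hdisj : Disjoint mu S := disjoint_sdiff.mono_right hSm
    have hS_eq : (mu ∪ S) \ mu = S := union_sdiff_cancel_left hdisj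
    have hrest : m \ (mu ∪ S) = (m \ mu) \ S := sdiff_sdiff_left.symm
    have hexp : nstF S (mu ∪ S) + nstF ((m \ mu) \ S) (mu ∪ S) =
        nstF (m \ mu) mu + nstF (m \ mu) S := by
      rw [← nstF_union_left _ disjoint_sdiff, union_sdiff_of_subset hSm,
        nstF_union_right _ hdisj]
    rw [hS_eq, hrest, mul_assoc, ← mul_inv, ← pow_add, hexp, pow_add, mul_inv]
    ring
  rw [Icc_eq_image_powerset hmu, sum_image (fun S hS S' hS' h => ?_), sum_congr rfl hterm,
    ← mul_sum, sum_powerset_neg_one_pow_mul_inv_pow_nstF]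
  · by_cases h : mu = m
    · subst h
      simp [nstF]
    · rw [if_neg h, if_neg fun hT => h (subset_antisymm hmu (sdiff_eq_empty_iff_subset.mp hT)),
        mul_zero]
  · rw [← union_sdiff_cancel_left (disjoint_sdiff.mono_right (mem_powerset.mp hS)),
      ← union_sdiff_cancel_left (disjoint_sdiff.mono_right (mem_powerset.mp hS')), h]

lemma mem_allSP_of_subset {n : ℕ} {m nu : Finset (ℕ × ℕ)} (hm : m ∈ allSP n) (h : nu ⊆ m) :
    nu ∈ allSP n := by
  simp only [allSP, mem_filter, mem_powerset, IsSP] at hm ⊢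
  exact ⟨h.trans hm.1, fun a ha => hm.2.1 a (h ha), fun a ha b hb => hm.2.2 a (h ha) b (h hb)⟩

theorem stmt_4_general (n : ℕ) (q : ℚ) (mu : Finset (ℕ × ℕ))
    (hmu : mu ∈ allSP n) :
    (Finsupp.single mu (1 : ℚ)) =
      ∑ nu ∈ (allSP n).filter (fun nu => mu ⊆ nu),
        ((-1 : ℚ) ^ ((nu \ mu).card) * (q ^ nstF (nu \ mu) nu)⁻¹) •
          (∑ m ∈ (allSP n).filter (fun m => nu ⊆ m),
            (q ^ nstF (m \ nu) nu)⁻¹ • Finsupp.single m (1 : ℚ)) := by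
  ext m
  simp only [Finsupp.finsetSum_apply, Finsupp.smul_apply, Finsupp.single_apply, smul_eq_mul,
    mul_ite, mul_one, mul_zero, sum_ite_eq', mem_filter]
  by_cases hm : m ∈ allSP n
  · have hIcc : ((allSP n).filter fun nu => mu ⊆ nu ∧ nu ⊆ m) = Icc mu m := by
      ext nu
      simp only [mem_filter, mem_Icc, and_iff_right_iff_imp]
      exact fun h => mem_allSP_of_subset hm h.2
    simp only [hm, true_and]
    rw [← sum_Icc_neg_one_pow_mul_inv_pow_nstF, ← hIcc, ← filter_filter, sum_filter]
  · rw [if_neg (by rintro rfl; exact hm hmu)]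
    simp [hm]

/-- Möbius-type inversion: with `ρ_ν = Σ_{μ ⊇ ν} q^{-nst(μ-ν,ν)} κ_μ` in the free module
with basis `{κ_μ}`, one has `κ_μ = Σ_{ν ⊇ μ} (-1)^{|ν-μ|} q^{-nst(ν-μ,ν)} ρ_ν`. -/
theorem stmt_4 (n : ℕ) (q : ℚ) (hq : 0 < q) (mu : Finset (ℕ × ℕ))
    (hmu : mu ∈ allSP n) :
    (Finsupp.single mu (1 : ℚ)) =
      ∑ nu ∈ (allSP n).filter (fun nu => mu ⊆ nu),
        ((-1 : ℚ) ^ ((nu \ mu).card) * (q ^ nstF (nu \ mu) nu)⁻¹) •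
          (∑ m ∈ (allSP n).filter (fun m => nu ⊆ m),
            (q ^ nstF (m \ nu) nu)⁻¹ • Finsupp.single m (1 : ℚ)) :=
  stmt_4_general n q mu hmu
end
end

section
/- Let λ be a set partition of {1,...,n} and let α = (i,l) ∈ λ be an arc maximal in λ−ν with respect to l−i, where ν ⊆ λ. For any μ with ν ⊆ μ ⊆ λ, the involution ι toggling membership of α in μ satisfies nst(ι(μ)−ν, ν) + nst(λ−ι(μ), λ) = nst(μ−ν, ν) + nst(λ−μ, λ). -/
open scoped Classical
open Finset

noncomputable section

lemma nstF_insert_s5 (A B : Finset (ℕ × ℕ)) (a : ℕ × ℕ) (ha : a ∉ A) :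
    nstF (insert a A) B =
      nstF A B + (B.filter fun b => b.1 < a.1 ∧ a.1 < a.2 ∧ a.2 < b.2).card := by
  classical
  have key : ∀ C : Finset (ℕ × ℕ),
      nstF C B = ∑ b ∈ B, ∑ c ∈ C,
        (if b.1 < c.1 ∧ c.1 < c.2 ∧ c.2 < b.2 then 1 else 0) := by
    intro C
    rw [nstF, Finset.card_filter, Finset.sum_product]
  rw [key, key, Finset.card_filter]
  rw [← Finset.sum_add_distrib]
  apply Finset.sum_congr rfl
  intro b _
  rw [Finset.sum_insert ha, add_comm]

lemma nstF_erase (A B : Finset (ℕ × ℕ)) (a : ℕ × ℕ) (ha : a ∈ A) :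
    nstF A B =
      nstF (A.erase a) B + (B.filter fun b => b.1 < a.1 ∧ a.1 < a.2 ∧ a.2 < b.2).card := by
  classical
  have := nstF_insert_s5 (A.erase a) B a (Finset.notMem_erase a A)
  rwa [Finset.insert_erase ha] at this


/-- The involution toggling a maximal-length arc `α = (i,l) ∈ λ - ν` preserves
`nst(μ-ν,ν) + nst(λ-μ,λ)`. -/
theorem stmt_5 (n : ℕ) (lam nu mu : Finset (ℕ × ℕ)) (hlam : IsSP n lam)
    (hnusub : nu ⊆ lam) (hne : nu ≠ lam) (i l : ℕ) (ha : (i, l) ∈ lam \ nu)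
    (hmax : ∀ a ∈ lam \ nu, a.2 - a.1 ≤ l - i)
    (hsub1 : nu ⊆ mu) (hsub2 : mu ⊆ lam) :
    nstF ((if (i, l) ∈ mu then mu.erase (i, l) else insert (i, l) mu) \ nu) nu +
      nstF (lam \ (if (i, l) ∈ mu then mu.erase (i, l) else insert (i, l) mu)) lam =
    nstF (mu \ nu) nu + nstF (lam \ mu) lam := by
  classical
  obtain ⟨hal, hanu⟩ := Finset.mem_sdiff.mp ha
  have hil : i < l := (hlam.1 _ hal).2.1
  have hanumu : (i, l) ∉ nu := hanu
  -- key: the filter over nu equals the filter over lam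
  have hfilt : (nu.filter fun b => b.1 < i ∧ i < l ∧ l < b.2) =
      (lam.filter fun b => b.1 < i ∧ i < l ∧ l < b.2) := by
    apply Finset.Subset.antisymm
    · exact Finset.filter_subset_filter _ hnusub
    · intro b hb
      rw [Finset.mem_filter] at hb ⊢
      refine ⟨?_, hb.2⟩
      by_contra hbnu
      have hbsd : b ∈ lam \ nu := Finset.mem_sdiff.mpr ⟨hb.1, hbnu⟩
      have := hmax b hbsd
      obtain ⟨h1, h2, h3⟩ := hb.2
      omega
  by_cases hmem : (i, l) ∈ mu
  · simp only [if_pos hmem]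
    have h1 : mu.erase (i, l) \ nu = (mu \ nu).erase (i, l) := by
      ext x
      simp only [Finset.mem_sdiff, Finset.mem_erase]
      tauto
    have h2 : lam \ mu.erase (i, l) = insert (i, l) (lam \ mu) := by
      ext x
      simp only [Finset.mem_sdiff, Finset.mem_erase, Finset.mem_insert]
      by_cases hx : x = (i, l)
      · subst hx; simp [hal]
      · simp [hx]
    have hnotmem : (i, l) ∉ lam \ mu := by simp [hmem]
    rw [h1, h2, nstF_insert_s5 _ _ _ hnotmem,
        nstF_erase (mu \ nu) nu (i, l) (Finset.mem_sdiff.mpr ⟨hmem, hanumu⟩)]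
    simp only [hfilt]
    ring
  · simp only [if_neg hmem]
    have h1 : insert (i, l) mu \ nu = insert (i, l) (mu \ nu) := by
      ext x
      simp only [Finset.mem_sdiff, Finset.mem_insert]
      by_cases hx : x = (i, l)
      · subst hx; simp [hanumu]
      · simp [hx]
    have h2 : lam \ insert (i, l) mu = (lam \ mu).erase (i, l) := by
      ext x
      simp only [Finset.mem_sdiff, Finset.mem_insert, Finset.mem_erase]
      tauto
    have hnotmem : (i, l) ∉ mu \ nu := by simp [hmem]
    rw [h1, h2, nstF_insert_s5 _ _ _ hnotmem,
        nstF_erase (lam \ mu) lam (i, l) (Finset.mem_sdiff.mpr ⟨hal, hmem⟩)]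
    simp only [hfilt]
    ring
end
end

section
/- For a set partition λ of {1,...,n}, the diagonal coefficient identity holds: Σ_{μ ⊆ λ} χ^λ_μ · (−1)^{|λ−μ|} q^{−nst(λ−μ, λ)} = (−1)^{|λ|} q^{dim(λ) − nst(λ,λ)}, where for μ ⊆ λ the coefficient is χ^λ_μ = (q−1)^{|λ|−|λ∩μ|} q^{dim(λ)−|λ|} (−1)^{|λ∩μ|} q^{−nst(μ,λ)} (the crossing condition on the arcs of μ relative to λ being automatically satisfied since μ ⊆ λ). -/
open scoped Classical
open Finset

noncomputable section

lemma nstF_union_of_disjoint (A A' B : Finset (ℕ × ℕ)) (hd : Disjoint A A') :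
    nstF (A ∪ A') B = nstF A B + nstF A' B := by
  unfold nstF
  rw [Finset.product_union, Finset.filter_union, Finset.card_union_of_disjoint]
  apply Finset.disjoint_filter_filter
  rw [Finset.disjoint_left]
  intro p hp hp'
  rw [Finset.mem_product] at hp hp'
  exact (Finset.disjoint_left.mp hd) hp.2 hp'.2

/-- Diagonal coefficient identity:
`Σ_{μ ⊆ λ} χ^λ_μ (-1)^{|λ-μ|} q^{-nst(λ-μ,λ)} = (-1)^{|λ|} q^{dim(λ) - nst(λ,λ)}`. -/
theorem stmt_6 (n : ℕ) (q : ℚ) (hq : 0 < q) (lam : Finset (ℕ × ℕ))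
    (h : IsSP n lam) :
    ∑ mu ∈ lam.powerset,
      chiF q lam mu * (-1 : ℚ) ^ ((lam \ mu).card) * (q ^ nstF (lam \ mu) lam)⁻¹ =
    (-1 : ℚ) ^ lam.card * q ^ (dimF lam - nstF lam lam) := by
  have hq0 : (q : ℚ) ≠ 0 := ne_of_gt hq
  -- card ≤ dim
  have hcd : lam.card ≤ dimF lam := by
    calc lam.card = ∑ _a ∈ lam, 1 := (Finset.card_eq_sum_ones lam)
    _ ≤ ∑ a ∈ lam, (a.2 - a.1) :=
        Finset.sum_le_sum (fun a ha => by have := h.1 a ha; omega)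
  -- nst ≤ dim
  have hnd : nstF lam lam ≤ dimF lam := by
    have h1 : nstF lam lam ≤ (lam.sigma fun b => Finset.Ioo b.1 b.2).card := by
      apply Finset.card_le_card_of_injOn (fun p => ⟨p.1, p.2.1⟩)
      · intro p hp
        simp only [Finset.mem_coe, Finset.mem_filter, Finset.mem_product] at hp
        simp only [Finset.mem_coe, Finset.mem_sigma, Finset.mem_Ioo]
        exact ⟨hp.1.1, hp.2.1, by omega⟩
      · intro p hp p' hp' he
        simp only [Finset.coe_filter, Set.mem_setOf_eq, Finset.mem_product] at hp hp'
        have h1 : p.1 = p'.1 := congrArg Sigma.fst he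
        have h2 : p.2.1 = p'.2.1 := by
          have := congrArg Sigma.snd he
          simpa [h1] using he
        have h3 : p.2 = p'.2 := by
          by_contra hne
          exact (h.2 p.2 hp.1.2 p'.2 hp'.1.2 hne).1 h2
        exact Prod.ext h1 h3
    have h2 : (lam.sigma fun b => Finset.Ioo b.1 b.2).card ≤ dimF lam := by
      rw [Finset.card_sigma]
      unfold dimF
      apply Finset.sum_le_sum
      intro b _
      rw [Nat.card_Ioo]
      omega
    exact le_trans h1 h2
  -- per-term rewriting
  have hterm : ∀ mu ∈ lam.powerset,
      chiF q lam mu * (-1 : ℚ) ^ ((lam \ mu).card) * (q ^ nstF (lam \ mu) lam)⁻¹ =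
      (q - 1) ^ ((lam \ mu).card) *
        ((-1 : ℚ) ^ lam.card * q ^ (dimF lam - lam.card) * (q ^ nstF lam lam)⁻¹) := by
    intro mu hmu
    rw [Finset.mem_powerset] at hmu
    have hcond : ∀ i j k : ℕ, i < j → j < k → (i, k) ∈ lam → (i, j) ∉ mu ∧ (j, k) ∉ mu := by
      intro i j k hij hjk hik
      constructor
      · intro hm
        have := (h.2 (i, j) (hmu hm) (i, k) hik (by simp only [ne_eq, Prod.mk.injEq]; omega)).1
        simp at this
      · intro hm
        have := (h.2 (j, k) (hmu hm) (i, k) hik (by simp only [ne_eq, Prod.mk.injEq]; omega)).2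
        simp at this
    rw [chiF, if_pos hcond]
    have hint : lam ∩ mu = mu := Finset.inter_eq_right.mpr hmu
    have hcard : mu.card + (lam \ mu).card = lam.card := by
      rw [Finset.card_sdiff_of_subset hmu]
      have := Finset.card_le_card hmu
      omega
    have hnst : nstF mu lam + nstF (lam \ mu) lam = nstF lam lam := by
      rw [← nstF_union_of_disjoint _ _ _ Finset.disjoint_sdiff,
        Finset.union_sdiff_of_subset hmu]
    have hsd : lam.card - mu.card = (lam \ mu).card := (Finset.card_sdiff_of_subset hmu).symm
    rw [hint, hsd]
    have hsgn : (-1 : ℚ) ^ mu.card * (-1 : ℚ) ^ ((lam \ mu).card) = (-1 : ℚ) ^ lam.card := by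
      rw [← pow_add, hcard]
    have hpq : (q ^ nstF mu lam)⁻¹ * (q ^ nstF (lam \ mu) lam)⁻¹ = (q ^ nstF lam lam)⁻¹ := by
      rw [← mul_inv, ← pow_add, hnst]
    calc (q - 1) ^ ((lam \ mu).card) * q ^ (dimF lam - lam.card) * (-1 : ℚ) ^ mu.card *
          (q ^ nstF mu lam)⁻¹ * (-1 : ℚ) ^ ((lam \ mu).card) * (q ^ nstF (lam \ mu) lam)⁻¹
        = (q - 1) ^ ((lam \ mu).card) * (((-1 : ℚ) ^ mu.card * (-1 : ℚ) ^ ((lam \ mu).card)) *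
            q ^ (dimF lam - lam.card) *
            ((q ^ nstF mu lam)⁻¹ * (q ^ nstF (lam \ mu) lam)⁻¹)) := by ring
      _ = (q - 1) ^ ((lam \ mu).card) *
            ((-1 : ℚ) ^ lam.card * q ^ (dimF lam - lam.card) * (q ^ nstF lam lam)⁻¹) := by
          rw [hsgn, hpq]
  rw [Finset.sum_congr rfl hterm, ← Finset.sum_mul]
  have hsum : ∑ mu ∈ lam.powerset, (q - 1 : ℚ) ^ ((lam \ mu).card) = q ^ lam.card := by
    have hpa := Finset.prod_add (fun _ : ℕ × ℕ => (1 : ℚ)) (fun _ => q - 1) lam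
    simp only [Finset.prod_const_one, one_mul, Finset.prod_const] at hpa
    have : (1 + (q - 1)) = q := by ring
    rw [this] at hpa
    rw [← hpa]
  rw [hsum]
  rw [pow_sub₀ q hq0 hnd, pow_sub₀ q hq0 hcd]
  field_simp
end
end

section
/- (Coefficient formula) For set partitions λ, ν of {1,...,n}: Σ_{μ⊆ν} χ^λ_μ (−1)^{|ν−μ|} q^{−nst(ν−μ,ν)} = (−1)^{|ν|} q^{dim(λ)} (q−1)^{|λ−ν|} q^{−(|λ|+snst(ν,λ)+nst(ν,ν))} · ∏_{(i,j)∈ν∩λ} ((q−1)q^{nst({(i,j)},λ)} + q^{nst({(i,j)},ν)}) · ∏_{(i,j)∈ν−λ, (i,j)∉cflt(λ)} (q^{nst({(i,j)},λ)} − q^{nst({(i,j)},ν)}). -/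
open scoped Classical
open Finset

noncomputable section

local notation "X" => (RatFunc.X : RatFunc ℚ)

/-!
For `μ ⊆ ν`, the summand `χ^λ_μ (-1)^{|ν-μ|} q^{-nst(ν-μ,ν)}` is `(q-1)^{|λ-ν|} q^{dim λ-|λ|}`
times a product of one weight per arc of `μ` and one per arc of `ν - μ`, because `nst` is additive
in its first argument; the weight of an arc of `μ` vanishes on `cflt(λ)`, which encodes the
support condition of `χ^λ_μ`. Hence the sum over `μ ⊆ ν` is the product over `a ∈ ν` of the sums
of the two weights of `a`, and each of these is evaluated according to whether `a ∈ λ`,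
`a ∈ cflt(λ)` or neither; arcs of `λ` never lie in `cflt(λ)` since `λ` is a set partition.
-/

namespace SetPartition

variable {K : Type*} [Field K]

lemma nstF_eq_sum_singleton (A B : Finset (ℕ × ℕ)) : nstF A B = ∑ a ∈ A, nstF {a} B := by
  rw [nstF, card_filter, sum_product_right]
  refine sum_congr rfl fun a _ => ?_
  rw [nstF, card_filter, sum_product_right, sum_singleton]

lemma snstF_eq_sum_singleton (nu lam : Finset (ℕ × ℕ)) :
    snstF nu lam = ∑ a ∈ nu.filter (fun a => ¬ cfltP lam a), nstF {a} lam := by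
  rw [snstF, card_filter, sum_product_right, sum_filter]
  refine sum_congr rfl fun a _ => ?_
  by_cases h : cfltP lam a
  · simp [h]
  · rw [if_pos h, nstF, card_filter, sum_product_right, sum_singleton]
    simp [h]

lemma chiF_support_iff (lam mu : Finset (ℕ × ℕ)) :
    (∀ i j k : ℕ, i < j → j < k → (i, k) ∈ lam → (i, j) ∉ mu ∧ (j, k) ∉ mu) ↔
      ∀ a ∈ mu, ¬ cfltP lam a := by
  constructor
  · rintro h ⟨j, k⟩ ha ⟨⟨i, l⟩, hb, ⟨hij, hjk, hkl⟩ | ⟨hij, hjk, hkl⟩⟩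
    · dsimp only at hij hjk hkl
      subst hij
      exact (h i k l hjk hkl hb).1 ha
    · dsimp only at hij hjk hkl
      subst hkl
      exact (h i j k hij hjk hb).2 ha
  · intro h i j k hij hjk hik
    exact ⟨fun hmem => h _ hmem ⟨(i, k), hik, Or.inl ⟨rfl, hij, hjk⟩⟩,
      fun hmem => h _ hmem ⟨(i, k), hik, Or.inr ⟨hij, hjk, rfl⟩⟩⟩

lemma not_cfltP_of_mem {n : ℕ} {lam : Finset (ℕ × ℕ)} (hlam : IsSP n lam)
    {a : ℕ × ℕ} (ha : a ∈ lam) : ¬ cfltP lam a := by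
  rintro ⟨b, hb, ⟨h1, -, h3⟩ | ⟨h1, -, h3⟩⟩
  · exact (hlam.2 a ha b hb (by rintro rfl; exact h3.false)).1 h1.symm
  · exact (hlam.2 a ha b hb (by rintro rfl; exact h1.false)).2 h3

lemma card_le_dimF {n : ℕ} {lam : Finset (ℕ × ℕ)} (hlam : IsSP n lam) :
    lam.card ≤ dimF lam := by
  rw [card_eq_sum_ones, dimF]
  exact sum_le_sum fun a ha => by have := (hlam.1 a ha).2.1; omega

lemma card_sub_card_inter_of_subset {lam nu mu : Finset (ℕ × ℕ)} (hmu : mu ⊆ nu) :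
    lam.card - (lam ∩ mu).card = (lam \ nu).card + (lam ∩ (nu \ mu)).card := by
  have hsplit : lam \ mu = (lam \ nu) ∪ (lam ∩ (nu \ mu)) := by
    ext a
    have := @hmu a
    simp only [mem_sdiff, mem_union, mem_inter]
    tauto
  have hdisj : Disjoint (lam \ nu) (lam ∩ (nu \ mu)) :=
    disjoint_left.2 fun a ha hb => (mem_sdiff.1 ha).2 (mem_sdiff.1 (mem_inter.1 hb).2).1
  rw [← card_union_of_disjoint hdisj, ← hsplit, card_sdiff, inter_comm]

def weightIn (q : K) (lam : Finset (ℕ × ℕ)) (a : ℕ × ℕ) : K :=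
  (if cfltP lam a then 0 else if a ∈ lam then -1 else 1) * (q ^ nstF {a} lam)⁻¹

def weightOut (q : K) (lam nu : Finset (ℕ × ℕ)) (a : ℕ × ℕ) : K :=
  (if a ∈ lam then q - 1 else 1) * (-1) * (q ^ nstF {a} nu)⁻¹

lemma prod_weightIn {q : K} {lam mu : Finset (ℕ × ℕ)} (hmu : ∀ a ∈ mu, ¬ cfltP lam a) :
    ∏ a ∈ mu, weightIn q lam a = (-1) ^ (lam ∩ mu).card * (q ^ nstF mu lam)⁻¹ := by
  unfold weightIn
  rw [prod_mul_distrib, prod_congr rfl fun a ha => by rw [if_neg (hmu a ha)],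
    prod_ite_mem, prod_const, prod_inv_distrib, prod_pow_eq_pow_sum,
    ← nstF_eq_sum_singleton, inter_comm]

lemma prod_weightOut (q : K) (lam nu mu : Finset (ℕ × ℕ)) :
    ∏ a ∈ nu \ mu, weightOut q lam nu a =
      (q - 1) ^ (lam ∩ (nu \ mu)).card * (-1) ^ (nu \ mu).card * (q ^ nstF (nu \ mu) nu)⁻¹ := by
  unfold weightOut
  rw [prod_mul_distrib, prod_mul_distrib, prod_ite_mem, prod_const, prod_const, prod_inv_distrib,
    prod_pow_eq_pow_sum, ← nstF_eq_sum_singleton, inter_comm]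

lemma chiF_mul_eq_prod_weight (q : K) (lam : Finset (ℕ × ℕ)) {nu mu : Finset (ℕ × ℕ)}
    (hmu : mu ⊆ nu) :
    chiF q lam mu * (-1) ^ (nu \ mu).card * (q ^ nstF (nu \ mu) nu)⁻¹ =
      (q - 1) ^ (lam \ nu).card * q ^ (dimF lam - lam.card) *
        ((∏ a ∈ mu, weightIn q lam a) * ∏ a ∈ nu \ mu, weightOut q lam nu a) := by
  by_cases hsupp : ∀ a ∈ mu, ¬ cfltP lam a
  · rw [chiF, if_pos ((chiF_support_iff lam mu).2 hsupp), prod_weightIn hsupp, prod_weightOut,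
      card_sub_card_inter_of_subset hmu, pow_add]
    ring
  · push Not at hsupp
    obtain ⟨a, ha, hc⟩ := hsupp
    rw [chiF, if_neg fun h => (chiF_support_iff lam mu).1 h a ha hc,
      prod_eq_zero ha (by simp [weightIn, hc])]
    ring

def arcFactor (q : K) (lam nu : Finset (ℕ × ℕ)) (a : ℕ × ℕ) : K :=
  if a ∈ lam then (q - 1) * q ^ nstF {a} lam + q ^ nstF {a} nu
  else if cfltP lam a then 1 else q ^ nstF {a} lam - q ^ nstF {a} nu

lemma weightIn_add_weightOut {n : ℕ} {q : K} (hq : q ≠ 0) {lam : Finset (ℕ × ℕ)}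
    (hlam : IsSP n lam) (nu : Finset (ℕ × ℕ)) (a : ℕ × ℕ) :
    weightIn q lam a + weightOut q lam nu a =
      -1 * (q ^ ((if cfltP lam a then 0 else nstF {a} lam) + nstF {a} nu))⁻¹ *
        arcFactor q lam nu a := by
  unfold weightIn weightOut arcFactor
  by_cases hm : a ∈ lam
  · simp only [hm, not_cfltP_of_mem hlam hm, if_true, if_false]
    field_simp
    ring
  · by_cases hc : cfltP lam a <;> simp only [hm, hc, if_false, if_true] <;> field_simp <;> ring

lemma prod_arcFactor (q : K) (lam nu : Finset (ℕ × ℕ)) :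
    ∏ a ∈ nu, arcFactor q lam nu a =
      (∏ a ∈ nu ∩ lam, ((q - 1) * q ^ nstF {a} lam + q ^ nstF {a} nu)) *
        ∏ a ∈ (nu \ lam).filter (fun a => ¬ cfltP lam a), (q ^ nstF {a} lam - q ^ nstF {a} nu) := by
  unfold arcFactor
  rw [prod_ite, filter_mem_eq_inter, prod_ite, prod_const_one, one_mul,
    filter_filter]
  congr 2
  ext a
  simp only [mem_filter, mem_sdiff, and_assoc]

lemma prod_weightIn_add_weightOut {n : ℕ} {q : K} (hq : q ≠ 0) {lam : Finset (ℕ × ℕ)}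
    (hlam : IsSP n lam) (nu : Finset (ℕ × ℕ)) :
    ∏ a ∈ nu, (weightIn q lam a + weightOut q lam nu a) =
      (-1) ^ nu.card * (q ^ (snstF nu lam + nstF nu nu))⁻¹ * ∏ a ∈ nu, arcFactor q lam nu a := by
  have hexp : ∑ a ∈ nu, ((if cfltP lam a then 0 else nstF {a} lam) + nstF {a} nu) =
      snstF nu lam + nstF nu nu := by
    rw [sum_add_distrib, ← nstF_eq_sum_singleton, snstF_eq_sum_singleton, sum_filter]
    congr 1
    exact sum_congr rfl fun a _ => by split_ifs <;> rfl
  simp_rw [weightIn_add_weightOut hq hlam, prod_mul_distrib, prod_const,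
    prod_inv_distrib, prod_pow_eq_pow_sum, hexp]

theorem sum_powerset_chiF_mul {n : ℕ} {q : K} (hq : q ≠ 0) {lam : Finset (ℕ × ℕ)}
    (hlam : IsSP n lam) (nu : Finset (ℕ × ℕ)) :
    ∑ mu ∈ nu.powerset, chiF q lam mu * (-1) ^ (nu \ mu).card * (q ^ nstF (nu \ mu) nu)⁻¹ =
      (-1) ^ nu.card * q ^ dimF lam * (q - 1) ^ (lam \ nu).card *
        (q ^ (lam.card + snstF nu lam + nstF nu nu))⁻¹ *
        (∏ a ∈ nu ∩ lam, ((q - 1) * q ^ nstF {a} lam + q ^ nstF {a} nu)) *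
        (∏ a ∈ (nu \ lam).filter (fun a => ¬ cfltP lam a),
          (q ^ nstF {a} lam - q ^ nstF {a} nu)) := by
  have hsum : ∑ mu ∈ nu.powerset,
      chiF q lam mu * (-1) ^ (nu \ mu).card * (q ^ nstF (nu \ mu) nu)⁻¹ =
        (q - 1) ^ (lam \ nu).card * q ^ (dimF lam - lam.card) *
          ∏ a ∈ nu, (weightIn q lam a + weightOut q lam nu a) := by
    rw [prod_add, mul_sum]
    exact sum_congr rfl fun mu hmu => chiF_mul_eq_prod_weight q lam (mem_powerset.1 hmu)
  have hdim : q ^ dimF lam = q ^ (dimF lam - lam.card) * q ^ lam.card := by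
    rw [← pow_add, Nat.sub_add_cancel (card_le_dimF hlam)]
  rw [hsum, prod_weightIn_add_weightOut hq hlam, prod_arcFactor, hdim, add_assoc, pow_add,
    mul_inv]
  field_simp
  ring

end SetPartition

theorem stmt_10_general (n : ℕ) (lam nu : Finset (ℕ × ℕ))
    (hlam : IsSP n lam) :
    ∑ mu ∈ nu.powerset,
      chiF X lam mu * (-1 : RatFunc ℚ) ^ ((nu \ mu).card) * (X ^ nstF (nu \ mu) nu)⁻¹ =
    (-1 : RatFunc ℚ) ^ nu.card * X ^ dimF lam * (X - 1) ^ ((lam \ nu).card) *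
      (X ^ (lam.card + snstF nu lam + nstF nu nu))⁻¹ *
      (∏ a ∈ nu ∩ lam, ((X - 1) * X ^ nstF {a} lam + X ^ nstF {a} nu)) *
      (∏ a ∈ (nu \ lam).filter (fun a => ¬ cfltP lam a),
        (X ^ nstF {a} lam - X ^ nstF {a} nu)) :=
  SetPartition.sum_powerset_chiF_mul RatFunc.X_ne_zero hlam nu

/-- Coefficient formula (Theorem 3.4): the coefficient of `ρ_ν(q)` in `χ^λ`. -/
theorem stmt_10 (n : ℕ) (lam nu : Finset (ℕ × ℕ))
    (hlam : IsSP n lam) (hnu : IsSP n nu) :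
    ∑ mu ∈ nu.powerset,
      chiF X lam mu * (-1 : RatFunc ℚ) ^ ((nu \ mu).card) * (X ^ nstF (nu \ mu) nu)⁻¹ =
    (-1 : RatFunc ℚ) ^ nu.card * X ^ dimF lam * (X - 1) ^ ((lam \ nu).card) *
      (X ^ (lam.card + snstF nu lam + nstF nu nu))⁻¹ *
      (∏ a ∈ nu ∩ lam, ((X - 1) * X ^ nstF {a} lam + X ^ nstF {a} nu)) *
      (∏ a ∈ (nu \ lam).filter (fun a => ¬ cfltP lam a),
        (X ^ nstF {a} lam - X ^ nstF {a} nu)) :=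
  stmt_10_general n lam nu hlam
end
end

section
/- For n ≥ 3, nst(n) := Σ_{λ ∈ S_n} nst(λ,λ) = Σ_{j=1}^{n−3} Σ_{k=j+1}^{n−2} j(k−j) · b[n,k,j], where b[n,k,j] counts set partitions of {1,...,n} containing arcs (j,n) and (k,n−1) when j<k<n−1, and those containing (j,n) and no arc into n−1 when k=n−1. -/
/-
Σ_λ nst(λ,λ) counts partitions together with a nested pair of their arcs, so it equals the sum,
over nested pairs (i, l) ⊃ (a, b) (i < a < b < l), of the number of partitions containing both
arcs. Removing the two arcs, these partitions are the rook placements on the staircase board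
{(x, y) : x < y ≤ n} with rows i, a and columns b, l deleted, a Ferrers board. Its number of
rook placements depends only on the multiset of offsets hₜ − t of its column heights
(Goldman–Joichi–White), which here consists of (i − 1) + (n − l) zeros, (a − i) + (l − 1 − b)
minus ones and b − 1 − a minus twos. The pair (j, n) ⊃ (k, n − 1) with j = i + n − l and
k = a + n − 1 − b has the same profile, so its count is b[n, k, j], and exactly j(k − j) nested
pairs share a given (j, k).
-/

open scoped Classical
open Finset

noncomputable section

/-- The three-index array `b[n,k,j]` counting set partitions with prescribed arcs into
`n` and `n-1`. -/
def b3 (n k j : ℕ) : ℕ :=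
  if k = n - 1 then
    ((allSP n).filter fun l =>
      (j, n) ∈ l ∧ ∀ i, 1 ≤ i → i < n - 1 → (i, n - 1) ∉ l).card
  else ((allSP n).filter fun l => (j, n) ∈ l ∧ (k, n - 1) ∈ l).card

/-- `ferrersCount o` is the number of rook placements (of every size) on the Ferrers board whose
columns, shortest first, have heights `o₁ + 1, o₂ + 2, …`: the first column is either empty, or
holds a rook in one of its `o₁ + 1` rows and that row is removed from every later column. -/
def ferrersCount : List ℤ → ℤ
  | [] => 1
  | o :: os => ferrersCount (os.map (· + 1)) + (o + 1) * ferrersCount os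
termination_by l => l.length
decreasing_by all_goals simp

theorem ferrersCount_cons (o : ℤ) (os : List ℤ) :
    ferrersCount (o :: os) = ferrersCount (os.map (· + 1)) + (o + 1) * ferrersCount os := by
  rw [ferrersCount]

theorem map_add_map_add (l : List ℤ) (c d : ℤ) :
    (l.map (· + c)).map (· + d) = l.map (· + (c + d)) := by
  simp only [List.map_map, Function.comp_def, add_assoc]

/-- Goldman–Joichi–White. The induction covers all shifts `· + c` at once, since the recursion
shifts the tail. -/
theorem ferrersCount_perm {l₁ l₂ : List ℤ} (h : l₁.Perm l₂) :
    ferrersCount l₁ = ferrersCount l₂ := by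
  suffices ∀ c : ℤ, ferrersCount (l₁.map (· + c)) = ferrersCount (l₂.map (· + c)) by
    simpa using this 0
  induction h with
  | nil => intro c; rfl
  | cons x _ ih =>
    intro c
    simp only [List.map_cons, ferrersCount_cons, map_add_map_add, ih]
  | swap x y l =>
    intro c
    simp only [List.map_cons, ferrersCount_cons, map_add_map_add]
    ring
  | trans _ _ ih₁ ih₂ => intro c; rw [ih₁, ih₂]

/-- `offsets [h₁, h₂, …] = [h₁ - 1, h₂ - 2, …]`. -/
def offsets : List ℤ → List ℤ
  | [] => []
  | h :: hs => (h - 1) :: (offsets hs).map (· - 1)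

theorem offsets_map_sub_one (l : List ℤ) : offsets (l.map (· - 1)) = (offsets l).map (· - 1) := by
  induction l with
  | nil => rfl
  | cons h hs ih => simp only [List.map_cons, offsets, ih]

theorem ferrersCount_offsets_cons (h : ℤ) (l : List ℤ) :
    ferrersCount (offsets (h :: l)) =
      ferrersCount (offsets l) + h * ferrersCount (offsets (l.map (· - 1))) := by
  rw [offsets, ferrersCount_cons, offsets_map_sub_one, List.map_map]
  simp only [Function.comp_def, sub_add_cancel, List.map_id']

theorem offsets_append (l₁ l₂ : List ℤ) :
    offsets (l₁ ++ l₂) = offsets l₁ ++ (offsets l₂).map (· - (l₁.length : ℤ)) := by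
  induction l₁ with
  | nil => simp [offsets]
  | cons h hs ih =>
    simp only [List.cons_append, offsets, ih, List.map_append, List.map_map, List.length_cons,
      Function.comp_def]
    push_cast
    congr 3
    funext t
    ring

def consecutive (s : ℤ) : ℕ → List ℤ
  | 0 => []
  | m + 1 => s :: consecutive (s + 1) m

theorem length_consecutive (s : ℤ) (m : ℕ) : (consecutive s m).length = m := by
  induction m generalizing s with
  | zero => rfl
  | succ m ih => simp [consecutive, ih]

theorem offsets_consecutive (s : ℤ) (m : ℕ) :
    offsets (consecutive s m) = List.replicate m (s - 1) := by
  induction m generalizing s with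
  | zero => rfl
  | succ m ih =>
    rw [consecutive, offsets, ih, List.map_replicate, List.replicate_succ]
    congr 2
    ring

theorem map_range'_eq_consecutive {f : ℕ → ℤ} {s m : ℕ} {c : ℤ}
    (hf : ∀ t < m, f (s + t) = c + t) : (List.range' s m).map f = consecutive c m := by
  induction m generalizing s c with
  | zero => rfl
  | succ m ih =>
    rw [List.range'_succ, List.map_cons, consecutive]
    congr 1
    · simpa using hf 0 m.succ_pos
    · refine ih fun t ht => ?_
      rw [add_assoc, add_comm 1, hf (t + 1) (by omega)]
      push_cast
      ring

def rookPlacements (cols : List ℕ) (rows : ℕ → Finset ℕ) : Finset (Finset (ℕ × ℕ)) :=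
  ((cols.toFinset.biUnion fun y => (rows y).image fun x => (x, y)).powerset).filter
    fun m => ∀ p ∈ m, ∀ q ∈ m, p ≠ q → p.1 ≠ q.1 ∧ p.2 ≠ q.2

theorem mem_rookPlacements {cols : List ℕ} {rows : ℕ → Finset ℕ} {m : Finset (ℕ × ℕ)} :
    m ∈ rookPlacements cols rows ↔ (∀ p ∈ m, p.2 ∈ cols ∧ p.1 ∈ rows p.2) ∧
      (∀ p ∈ m, ∀ q ∈ m, p ≠ q → p.1 ≠ q.1 ∧ p.2 ≠ q.2) := by
  simp only [rookPlacements, mem_filter, mem_powerset, subset_iff, mem_biUnion,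
    List.mem_toFinset, mem_image]
  refine and_congr_left fun _ => forall₂_congr fun p _ => ⟨?_, fun h => ⟨p.2, h.1, p.1, h.2, rfl⟩⟩
  rintro ⟨y, hy, x, hx, rfl⟩
  exact ⟨hy, hx⟩

theorem rookPlacements_nil (rows : ℕ → Finset ℕ) : rookPlacements [] rows = {∅} := by
  ext m
  simp only [mem_rookPlacements, List.not_mem_nil, false_and, mem_singleton,
    eq_empty_iff_forall_notMem]
  exact ⟨fun h p hp => h.1 p hp, fun h => ⟨fun p hp => (h p hp).elim, fun p hp => (h p hp).elim⟩⟩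

theorem notMem_of_mem_rookPlacements {cols : List ℕ} {rows : ℕ → Finset ℕ}
    {m : Finset (ℕ × ℕ)} (hm : m ∈ rookPlacements cols rows) {y : ℕ} (hy : y ∉ cols) (x : ℕ) :
    (x, y) ∉ m :=
  fun h => hy (mem_rookPlacements.mp hm |>.1 _ h).1

theorem rookPlacements_cons {y : ℕ} {cols : List ℕ} (hy : y ∉ cols) (rows : ℕ → Finset ℕ) :
    rookPlacements (y :: cols) rows = rookPlacements cols rows ∪
      (rows y).biUnion fun x =>
        (rookPlacements cols fun y' => rows y' \ {x}).image (insert (x, y)) := by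
  ext m
  simp only [mem_union, mem_biUnion, mem_image, mem_rookPlacements, List.mem_cons]
  constructor
  · rintro ⟨hcol, hdist⟩
    by_cases hfree : ∀ p ∈ m, p.2 ≠ y
    · exact Or.inl ⟨fun p hp => ⟨(hcol p hp).1.resolve_left (hfree p hp), (hcol p hp).2⟩, hdist⟩
    push Not at hfree
    obtain ⟨⟨x, _⟩, hp, rfl⟩ := hfree
    refine Or.inr ⟨x, (hcol _ hp).2, m.erase (x, _), ⟨fun q hq => ?_, fun q hq r hr =>
      hdist q (mem_of_mem_erase hq) r (mem_of_mem_erase hr)⟩, insert_erase hp⟩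
    obtain ⟨hqp, hq⟩ := mem_erase.mp hq
    have hd := hdist q hq _ hp hqp
    exact ⟨(hcol q hq).1.resolve_left hd.2, mem_sdiff.mpr ⟨(hcol q hq).2, by simpa using hd.1⟩⟩
  · rintro (⟨hcol, hdist⟩ | ⟨x, hx, m₀, ⟨hcol, hdist⟩, rfl⟩)
    · exact ⟨fun p hp => ⟨Or.inr (hcol p hp).1, (hcol p hp).2⟩, hdist⟩
    have hfresh : ∀ q ∈ m₀, q.1 ≠ x ∧ q.2 ≠ y := fun q hq =>
      ⟨by simpa using (mem_sdiff.mp (hcol q hq).2).2, fun h => hy (h ▸ (hcol q hq).1)⟩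
    refine ⟨fun p hp => ?_, fun p hp q hq hpq => ?_⟩
    · rcases mem_insert.mp hp with rfl | hp
      · exact ⟨Or.inl rfl, hx⟩
      · exact ⟨Or.inr (hcol p hp).1, (mem_sdiff.mp (hcol p hp).2).1⟩
    rcases mem_insert.mp hp with rfl | hp <;> rcases mem_insert.mp hq with rfl | hq
    · exact absurd rfl hpq
    · exact ⟨(hfresh q hq).1.symm, (hfresh q hq).2.symm⟩
    · exact hfresh p hp
    · exact hdist p hp q hq hpq

theorem card_rookPlacements_cons {y : ℕ} {cols : List ℕ} (hy : y ∉ cols) (rows : ℕ → Finset ℕ) :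
    #(rookPlacements (y :: cols) rows) = #(rookPlacements cols rows) +
      ∑ x ∈ rows y, #(rookPlacements cols fun y' => rows y' \ {x}) := by
  have hnew : ∀ x, ∀ m ∈ rookPlacements cols (fun y' => rows y' \ {x}), ∀ x', (x', y) ∉ m :=
    fun x m hm => notMem_of_mem_rookPlacements hm hy
  rw [rookPlacements_cons hy, card_union_of_disjoint, card_biUnion]
  · congr 1
    refine sum_congr rfl fun x _ => card_image_of_injOn fun m₀ hm₀ m₁ hm₁ he => ?_
    simpa [erase_insert (hnew x m₀ hm₀ x), erase_insert (hnew x m₁ hm₁ x)] using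
      congrArg (erase · (x, y)) he
  · intro x _ x' _ hxx'
    simp only [Function.onFun, disjoint_left, mem_image]
    rintro _ ⟨m₀, hm₀, rfl⟩ ⟨m₁, -, he⟩
    have : (x', y) ∈ insert (x, y) m₀ := he ▸ mem_insert_self _ _
    rcases mem_insert.mp this with h | h
    · exact hxx' (Prod.ext_iff.mp h).1.symm
    · exact hnew x m₀ hm₀ x' h
  · simp only [disjoint_left, mem_biUnion, mem_image]
    rintro m hm ⟨x, -, m₀, -, rfl⟩
    exact notMem_of_mem_rookPlacements hm hy x (mem_insert_self _ _)

theorem card_rookPlacements (cols : List ℕ) (rows : ℕ → Finset ℕ)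
    (h : cols.Pairwise fun y y' => y ≠ y' ∧ rows y ⊆ rows y') :
    (#(rookPlacements cols rows) : ℤ) =
      ferrersCount (offsets (cols.map fun y => (#(rows y) : ℤ))) := by
  induction cols generalizing rows with
  | nil => simp [rookPlacements_nil, offsets, ferrersCount]
  | cons y cols ih =>
    obtain ⟨hhead, htail⟩ := List.pairwise_cons.mp h
    have hy : y ∉ cols := fun hy => (hhead y hy).1 rfl
    have hrows : ∀ x ∈ rows y, (cols.map fun y' => (#(rows y' \ {x}) : ℤ)) =
        (cols.map fun y' => (#(rows y') : ℤ)).map (· - 1) := by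
      intro x hx
      rw [List.map_map]
      refine List.map_congr_left fun y' hy' => ?_
      have hxy' : x ∈ rows y' := (hhead y' hy').2 hx
      simp [card_sdiff_of_subset (singleton_subset_iff.mpr hxy'),
        Nat.cast_sub (one_le_card.mpr ⟨x, hxy'⟩)]
    have htail' : ∀ x, cols.Pairwise fun y y' => y ≠ y' ∧ rows y \ {x} ⊆ rows y' \ {x} :=
      fun x => htail.imp fun ⟨hne, hsub⟩ => ⟨hne, sdiff_subset_sdiff hsub le_rfl⟩
    rw [card_rookPlacements_cons hy, List.map_cons, ferrersCount_offsets_cons]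
    push_cast
    rw [ih rows htail, sum_congr rfl fun x hx => by rw [ih _ (htail' x), hrows x hx], sum_const,
      nsmul_eq_mul]

theorem mem_allSP {n : ℕ} {lam : Finset (ℕ × ℕ)} : lam ∈ allSP n ↔ IsSP n lam := by
  simp only [allSP, mem_filter, mem_powerset, and_iff_right_iff_imp]
  intro h p hp
  have := h.1 p hp
  simp only [mem_product, mem_Icc]
  omega

/-- `λ ↦ λ \ F`: the partitions containing `F` are `F` plus a rook placement on the staircase
board `{(x, y) : x < y}` with the rows and columns of `F` deleted. -/
theorem card_filter_superset_eq_card_rookPlacements {n : ℕ} {F : Finset (ℕ × ℕ)}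
    (hF : IsSP n F) {cols : List ℕ}
    (hcols : ∀ y, y ∈ cols ↔ 2 ≤ y ∧ y ≤ n ∧ y ∉ F.image Prod.snd) :
    #((allSP n).filter (F ⊆ ·)) =
      #(rookPlacements cols fun y => Icc 1 (y - 1) \ F.image Prod.fst) := by
  refine card_nbij' (· \ F) (· ∪ F) (fun lam hlam => ?_) (fun m hm => ?_)
    (fun lam hlam => sdiff_union_of_subset (mem_filter.mp hlam).2) (fun m hm => ?_)
  · obtain ⟨⟨hbound, hdist⟩, hFlam⟩ := mem_filter.mp hlam |>.imp_left mem_allSP.mp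
    simp only [mem_coe, mem_rookPlacements, mem_sdiff]
    refine ⟨fun p ⟨hp, hpF⟩ => ?_, fun p hp q hq => hdist p hp.1 q hq.1⟩
    have hfresh : ∀ f ∈ F, f.1 ≠ p.1 ∧ f.2 ≠ p.2 := fun f hf =>
      hdist f (hFlam hf) p hp (by rintro rfl; exact hpF hf)
    have := hbound p hp
    simp only [hcols, mem_Icc, mem_image, not_exists, not_and]
    exact ⟨⟨by omega, this.2.2, fun f hf => (hfresh f hf).2⟩, ⟨this.1, by omega⟩,
      fun f hf => (hfresh f hf).1⟩
  · obtain ⟨hcol, hdist⟩ := mem_rookPlacements.mp hm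
    simp only [hcols, mem_sdiff, mem_Icc, mem_image, not_exists, not_and] at hcol
    simp only [mem_coe, mem_filter, mem_allSP]
    refine ⟨⟨fun p hp => ?_, fun p hp q hq hpq => ?_⟩, subset_union_right⟩
    · rcases mem_union.mp hp with hp | hp
      · have := hcol p hp
        omega
      · exact hF.1 p hp
    · rcases mem_union.mp hp with hp | hp <;> rcases mem_union.mp hq with hq | hq
      · exact hdist p hp q hq hpq
      · exact ⟨fun h => (hcol p hp).2.2 q hq h.symm, fun h => (hcol p hp).1.2.2 q hq h.symm⟩
      · exact ⟨(hcol q hq).2.2 p hp, (hcol q hq).1.2.2 p hp⟩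
      · exact hF.2 p hp q hq hpq
  · refine union_sdiff_cancel_right (disjoint_left.mpr fun p hp hpF => ?_)
    exact ((hcols _).mp ((mem_rookPlacements.mp hm).1 p hp).1).2.2 (mem_image_of_mem _ hpF)

theorem card_Icc_sdiff_pair {i a : ℕ} (hi : 1 ≤ i) (hia : i < a) (m : ℕ) :
    (#(Icc 1 m \ {i, a}) : ℤ) = m - (if i ≤ m then 1 else 0) - (if a ≤ m then 1 else 0) := by
  have hinter : {i, a} ∩ Icc 1 m = ({i, a} : Finset ℕ).filter (· ≤ m) := by
    ext x
    simp only [mem_inter, mem_insert, mem_singleton, mem_Icc, mem_filter]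
    omega
  rw [card_sdiff, Nat.card_Icc, hinter, filter_insert, filter_singleton]
  split_ifs <;> simp [card_pair hia.ne] <;> omega

/-- The columns `2, …, n` other than `b` and `l`, cut at `i`, `a`, `b`, `l`: on each piece the
height `y - 1 - [i < y] - [a < y]` of column `y` grows by one per column. -/
def nestedCols (n i a b l : ℕ) : List ℕ :=
  List.range' 2 (i - 1) ++ List.range' (i + 1) (a - i) ++ List.range' (a + 1) (b - 1 - a) ++
    List.range' (b + 1) (l - 1 - b) ++ List.range' (l + 1) (n - l)

theorem mem_nestedCols {n i a b l : ℕ} (hi : 1 ≤ i) (hia : i < a) (hab : a < b) (hbl : b < l)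
    (hln : l ≤ n) (y : ℕ) :
    y ∈ nestedCols n i a b l ↔ 2 ≤ y ∧ y ≤ n ∧ y ∉ ({l, b} : Finset ℕ) := by
  simp only [nestedCols, List.mem_append, List.mem_range'_1, mem_insert, mem_singleton]
  omega

theorem nestedCols_pairwise_lt {n i a b l : ℕ} (hia : i < a) (hab : a < b) (hbl : b < l) :
    (nestedCols n i a b l).Pairwise (· < ·) := by
  simp only [nestedCols, List.pairwise_append, List.mem_append, List.mem_range'_1]
  and_intros <;> first | exact List.pairwise_lt_range' | (intros; omega)

theorem map_card_nestedCols {n i a b l : ℕ} (hi : 1 ≤ i) (hia : i < a) (hab : a < b)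
    (hbl : b < l) :
    (nestedCols n i a b l).map (fun y => (#(Icc 1 (y - 1) \ {i, a}) : ℤ)) =
      consecutive 1 (i - 1) ++ consecutive (i - 1) (a - i) ++ consecutive (a - 2) (b - 1 - a) ++
        consecutive (b - 2) (l - 1 - b) ++ consecutive (l - 2) (n - l) := by
  simp only [nestedCols, List.map_append, card_Icc_sdiff_pair hi hia]
  congr 1; congr 1; congr 1; congr 1
  all_goals
    refine map_range'_eq_consecutive fun t ht => ?_
    split_ifs <;> omega

theorem offsets_map_card_nestedCols {n i a b l : ℕ} (hi : 1 ≤ i) (hia : i < a) (hab : a < b)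
    (hbl : b < l) :
    offsets ((nestedCols n i a b l).map (fun y => (#(Icc 1 (y - 1) \ {i, a}) : ℤ))) =
      List.replicate (i - 1) 0 ++ List.replicate (a - i) (-1) ++ List.replicate (b - 1 - a) (-2) ++
        List.replicate (l - 1 - b) (-1) ++ List.replicate (n - l) 0 := by
  simp only [map_card_nestedCols hi hia hab hbl, offsets_append, offsets_consecutive,
    List.map_replicate, List.length_append, length_consecutive]
  congr 3
  · congr 2
    omega
  · congr 1
    omega
  all_goals omega

theorem card_filter_nested_arcs {n i a b l : ℕ} (hi : 1 ≤ i) (hia : i < a) (hab : a < b)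
    (hbl : b < l) (hln : l ≤ n) :
    (#((allSP n).filter fun lam => (i, l) ∈ lam ∧ (a, b) ∈ lam) : ℤ) =
      ferrersCount (List.replicate (i - 1 + (n - l)) 0 ++
        List.replicate (a - i + (l - 1 - b)) (-1) ++ List.replicate (b - 1 - a) (-2)) := by
  set F : Finset (ℕ × ℕ) := {(i, l), (a, b)}
  have hF : IsSP n F := by
    constructor <;> simp [F] <;> omega
  have hfilter : (allSP n).filter (fun lam => (i, l) ∈ lam ∧ (a, b) ∈ lam) =
      (allSP n).filter (F ⊆ ·) := by
    simp [F, insert_subset_iff]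
  have hcols : ∀ y, y ∈ nestedCols n i a b l ↔ 2 ≤ y ∧ y ≤ n ∧ y ∉ F.image Prod.snd := by
    simpa [F] using mem_nestedCols hi hia hab hbl hln
  have hsorted : (nestedCols n i a b l).Pairwise fun y y' =>
      y ≠ y' ∧ Icc 1 (y - 1) \ {i, a} ⊆ Icc 1 (y' - 1) \ {i, a} :=
    (nestedCols_pairwise_lt hia hab hbl).imp fun hyy' =>
      ⟨hyy'.ne, sdiff_subset_sdiff (Icc_subset_Icc le_rfl (by omega)) le_rfl⟩
  rw [hfilter, card_filter_superset_eq_card_rookPlacements hF hcols,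
    show F.image Prod.fst = {i, a} by simp [F], card_rookPlacements _ _ hsorted,
    offsets_map_card_nestedCols hi hia hab hbl]
  refine ferrersCount_perm (List.perm_iff_count.mpr fun v => ?_)
  simp only [List.count_append, List.count_replicate, beq_iff_eq]
  split_ifs <;> omega

def nestedPairs (n : ℕ) : Finset ((ℕ × ℕ) × (ℕ × ℕ)) :=
  ((Icc 1 n ×ˢ Icc 1 n) ×ˢ (Icc 1 n ×ˢ Icc 1 n)).filter
    fun p => p.1.1 < p.2.1 ∧ p.2.1 < p.2.2 ∧ p.2.2 < p.1.2

theorem mem_nestedPairs {n : ℕ} {p : (ℕ × ℕ) × (ℕ × ℕ)} :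
    p ∈ nestedPairs n ↔ 1 ≤ p.1.1 ∧ p.1.1 < p.2.1 ∧ p.2.1 < p.2.2 ∧ p.2.2 < p.1.2 ∧ p.1.2 ≤ n := by
  simp only [nestedPairs, mem_filter, mem_product, mem_Icc]
  omega

theorem sum_nstF_self_eq_sum_nestedPairs (n : ℕ) :
    ∑ lam ∈ allSP n, nstF lam lam =
      ∑ p ∈ nestedPairs n, #((allSP n).filter fun lam => p.1 ∈ lam ∧ p.2 ∈ lam) := by
  let r : Finset (ℕ × ℕ) → (ℕ × ℕ) × (ℕ × ℕ) → Prop := fun lam p => p.1 ∈ lam ∧ p.2 ∈ lam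
  calc ∑ lam ∈ allSP n, nstF lam lam
      = ∑ lam ∈ allSP n, #((nestedPairs n).bipartiteAbove r lam) :=
        sum_congr rfl fun lam hlam => congrArg card (ext fun p => ?_)
    _ = _ := sum_card_bipartiteAbove_eq_sum_card_bipartiteBelow r
  have hbound := (mem_allSP.mp hlam).1
  simp only [bipartiteAbove, r, mem_filter, mem_product, mem_nestedPairs]
  constructor
  · rintro ⟨⟨hp₁, hp₂⟩, hlt⟩
    have := hbound _ hp₁
    exact ⟨by omega, hp₁, hp₂⟩
  · rintro ⟨hlt, hp₁, hp₂⟩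
    exact ⟨⟨hp₁, hp₂⟩, by omega⟩

/-- The left ends `(j, k)` of the nested pair `((j, n), (k, n - 1))` that has as many
partitions containing it as the nested pair `p` (`card_filter_nestedPairs_eq_b3`). -/
def nestedShift (n : ℕ) (p : (ℕ × ℕ) × (ℕ × ℕ)) : ℕ × ℕ :=
  (p.1.1 + n - p.1.2, p.2.1 + n - 1 - p.2.2)

theorem card_filter_nestedPairs_eq_b3 {n : ℕ} {p : (ℕ × ℕ) × (ℕ × ℕ)} (hp : p ∈ nestedPairs n) :
    #((allSP n).filter fun lam => p.1 ∈ lam ∧ p.2 ∈ lam) =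
      b3 n (nestedShift n p).2 (nestedShift n p).1 := by
  obtain ⟨⟨i, l⟩, a, b⟩ := p
  obtain ⟨hi, hia, hab, hbl, hln⟩ : 1 ≤ i ∧ i < a ∧ a < b ∧ b < l ∧ l ≤ n := mem_nestedPairs.mp hp
  dsimp only [nestedShift]
  rw [b3, if_neg (by omega), ← Nat.cast_inj (R := ℤ),
    card_filter_nested_arcs hi hia hab hbl hln,
    card_filter_nested_arcs (i := i + n - l) (a := a + n - 1 - b) (b := n - 1) (l := n)
      (by omega) (by omega) (by omega) (by omega) le_rfl]
  congr 2
  · congr 2 <;> omega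
  · congr 1
    omega

theorem card_filter_nestedShift_eq {n j k : ℕ} (hj : 1 ≤ j) (hjk : j < k) (hk : k ≤ n - 2) :
    #((nestedPairs n).filter (nestedShift n · = (j, k))) = j * (k - j) := by
  rw [show j * (k - j) = #(Icc 1 j ×ˢ Icc 1 (k - j)) by simp]
  refine card_nbij' (fun p => (p.1.1, p.2.1 - p.1.1))
    (fun q => ((q.1, q.1 + n - j), (q.1 + q.2, q.1 + q.2 + n - 1 - k))) ?_ ?_ ?_ ?_
  · rintro ⟨⟨i, l⟩, a, b⟩ hp
    simp only [coe_filter, mem_nestedPairs, nestedShift, Set.mem_ofPred_eq, Prod.ext_iff] at hp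
    simp only [coe_product, Set.mem_prod, mem_coe, mem_Icc]
    omega
  · rintro ⟨x, t⟩ hq
    simp only [coe_product, Set.mem_prod, mem_coe, mem_Icc] at hq
    simp only [coe_filter, mem_nestedPairs, nestedShift, Set.mem_ofPred_eq, Prod.ext_iff]
    omega
  · rintro ⟨⟨i, l⟩, a, b⟩ hp
    simp only [coe_filter, mem_nestedPairs, nestedShift, Set.mem_ofPred_eq, Prod.ext_iff] at hp
    simp only [Prod.ext_iff, true_and]
    omega
  · rintro ⟨x, t⟩ -
    simp

theorem stmt_16_general (n : ℕ) :
    ∑ l ∈ allSP n, nstF l l =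
      ∑ j ∈ Finset.Icc 1 (n - 3), ∑ k ∈ Finset.Icc (j + 1) (n - 2),
        j * (k - j) * b3 n k j := by
  have hmaps : ∀ p ∈ nestedPairs n,
      nestedShift n p ∈ (Icc 1 (n - 3) ×ˢ Icc 1 (n - 2)).filter fun q => q.1 < q.2 := by
    intro p hp
    have := mem_nestedPairs.mp hp
    simp only [nestedShift, mem_filter, mem_product, mem_Icc]
    omega
  have hprod : ∀ q : ℕ × ℕ, q ∈ (Icc 1 (n - 3) ×ˢ Icc 1 (n - 2)).filter (fun q => q.1 < q.2) ↔
      q.1 ∈ Icc 1 (n - 3) ∧ q.2 ∈ Icc (q.1 + 1) (n - 2) := by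
    intro q
    simp only [mem_filter, mem_product, mem_Icc]
    omega
  rw [sum_nstF_self_eq_sum_nestedPairs, ← sum_fiberwise_of_maps_to hmaps,
    sum_finset_product _ _ (fun j => Icc (j + 1) (n - 2)) hprod]
  refine sum_congr rfl fun j hj => sum_congr rfl fun k hk => ?_
  rw [mem_Icc] at hj hk
  have hfiber : ∀ p ∈ (nestedPairs n).filter (nestedShift n · = (j, k)),
      #((allSP n).filter fun lam => p.1 ∈ lam ∧ p.2 ∈ lam) = b3 n k j := by
    intro p hp
    obtain ⟨hp, hshift⟩ := mem_filter.mp hp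
    rw [card_filter_nestedPairs_eq_b3 hp, hshift]
  rw [sum_congr rfl hfiber, sum_const, card_filter_nestedShift_eq hj.1 hk.1 hk.2, smul_eq_mul]

/-- `nst(n) = Σ_{λ∈S_n} nst(λ,λ) = Σ_{j=1}^{n-3} Σ_{k=j+1}^{n-2} j(k-j)·b[n,k,j]`. -/
theorem stmt_16 (n : ℕ) (hn : 3 ≤ n) :
    ∑ l ∈ allSP n, nstF l l =
      ∑ j ∈ Finset.Icc 1 (n - 3), ∑ k ∈ Finset.Icc (j + 1) (n - 2),
        j * (k - j) * b3 n k j :=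
  stmt_16_general n
end
end
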